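/- arXiv:2301.02052 — 7 statements merged into one kernel-verified Lean document; each statement's English description precedes it below -/
import Mathlib

section
/- Let U, Z, W, T be random variables on a probability space with T = τ(Z) a measurable function of Z. If W is conditionally independent of Z given U, and U is conditionally independent of Z given T, then W is conditionally independent of Z given T. -/
open MeasureTheory ProbabilityTheory

/-! For `s` in the σ-algebra of `W` and `v` in that of `Z`, it suffices to show
`∫_v P[s | T] = P(s ∩ v)`: since `σ(T) ≤ σ(Z)`, this makes `P[s | T]` a version of `P[s | Z]`,
which is conditional independence given `T`. Conditional expectation is self-adjoint on bounded
functions, and the hypotheses give the tower identities `E[P[s | U] | T] = P[s | T]` and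
`E[P[v | T] | U] = P[v | U]`. Moving conditional expectations across `∫ 1_v P[s | T]` with these
identities turns it into `∫ 1_v P[s | U]`, which is `P(s ∩ v)` because `W ⊥ Z | U`. -/

namespace MeasureTheory

variable {Ω : Type*} {m mΩ : MeasurableSpace Ω} {μ : Measure Ω}

lemma abs_indicator_one_le_one (s : Set Ω) (ω : Ω) :
    |s.indicator (fun _ => (1 : ℝ)) ω| ≤ 1 := by
  by_cases hω : ω ∈ s <;> simp [hω]

lemma ae_abs_condExp_indicator_le_one (s : Set Ω) : ∀ᵐ ω ∂μ, |(μ⟦s | m⟧) ω| ≤ 1 :=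
  ae_bdd_abs_condExp_of_ae_bdd_abs (ae_of_all _ (abs_indicator_one_le_one s))

lemma setIntegral_eq_integral_indicator_one_mul {s : Set Ω} (hs : MeasurableSet s) (f : Ω → ℝ) :
    ∫ ω in s, f ω ∂μ = ∫ ω, s.indicator (fun _ => (1 : ℝ)) ω * f ω ∂μ := by
  rw [← integral_indicator hs]
  congr with ω
  by_cases hω : ω ∈ s <;> simp [hω]

variable [IsFiniteMeasure μ]

lemma integral_mul_condExp_eq_integral_condExp_mul_condExp (hm : m ≤ mΩ) {f g : Ω → ℝ} {R : ℝ}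
    (hf : Integrable f μ) (hg : ∀ᵐ ω ∂μ, |g ω| ≤ R) :
    ∫ ω, f ω * μ[g|m] ω ∂μ = ∫ ω, μ[f|m] ω * μ[g|m] ω ∂μ := by
  have hfg : Integrable (f * μ[g|m]) μ := hf.mul_bdd
    (stronglyMeasurable_condExp.mono hm).aestronglyMeasurable (ae_bdd_abs_condExp_of_ae_bdd_abs hg)
  rw [← integral_condExp hm]
  exact integral_congr_ae
    (condExp_mul_of_stronglyMeasurable_right stronglyMeasurable_condExp hfg hf)

lemma integral_mul_condExp_eq_integral_condExp_mul (hm : m ≤ mΩ) {f g : Ω → ℝ} {R R' : ℝ}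
    (hf : Integrable f μ) (hfR : ∀ᵐ ω ∂μ, |f ω| ≤ R)
    (hg : Integrable g μ) (hgR : ∀ᵐ ω ∂μ, |g ω| ≤ R') :
    ∫ ω, f ω * μ[g|m] ω ∂μ = ∫ ω, μ[f|m] ω * g ω ∂μ := by
  simp_rw [integral_mul_condExp_eq_integral_condExp_mul_condExp hm hf hgR, mul_comm _ (g _),
    integral_mul_condExp_eq_integral_condExp_mul_condExp hm hg hfR, mul_comm]

end MeasureTheory

namespace ProbabilityTheory

variable {Ω : Type*} {m m₁ m₂ m' mΩ : MeasurableSpace Ω} [StandardBorelSpace Ω]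
  {hm : m ≤ mΩ} {μ : Measure Ω} [IsFiniteMeasure μ] {s t : Set Ω}

lemma CondIndep.setIntegral_condExp_indicator (h : CondIndep m m₁ m₂ hm μ)
    (hm₁ : m₁ ≤ mΩ) (hm₂ : m₂ ≤ mΩ) (hs : MeasurableSet[m₁] s) (ht : MeasurableSet[m₂] t) :
    ∫ ω in t, (μ⟦s | m⟧) ω ∂μ = ∫ ω in t, s.indicator (fun _ => (1 : ℝ)) ω ∂μ := by
  have hprod := (condIndep_iff m m₁ m₂ hm hm₁ hm₂ μ).mp h s t hs ht
  calc ∫ ω in t, (μ⟦s | m⟧) ω ∂μ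
      = ∫ ω, t.indicator (fun _ => (1 : ℝ)) ω * (μ⟦s | m⟧) ω ∂μ :=
        setIntegral_eq_integral_indicator_one_mul (hm₂ t ht) _
    _ = ∫ ω, (μ⟦t | m⟧) ω * (μ⟦s | m⟧) ω ∂μ :=
        integral_mul_condExp_eq_integral_condExp_mul_condExp hm
          ((integrable_const 1).indicator (hm₂ t ht)) (ae_of_all _ (abs_indicator_one_le_one s))
    _ = ∫ ω, (μ⟦s ∩ t | m⟧) ω ∂μ := by
        refine integral_congr_ae ?_
        filter_upwards [hprod] with ω hω
        rw [hω, Pi.mul_apply, mul_comm]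
    _ = ∫ ω in t, s.indicator (fun _ => (1 : ℝ)) ω ∂μ := by
        rw [integral_condExp hm, ← integral_indicator (hm₂ t ht), Set.indicator_indicator,
          Set.inter_comm]

lemma CondIndep.condExp_condExp_indicator (h : CondIndep m m₁ m₂ hm μ)
    (hm₁ : m₁ ≤ mΩ) (hm₂ : m₂ ≤ mΩ) (hm' : m' ≤ m₂) (hs : MeasurableSet[m₁] s) :
    μ[μ⟦s | m⟧|m'] =ᵐ[μ] μ⟦s | m'⟧ := by
  refine (ae_eq_condExp_of_forall_setIntegral_eq (hm'.trans hm₂) integrable_condExp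
    (fun _ _ _ => integrable_condExp.integrableOn) (fun r hr _ => ?_)
    stronglyMeasurable_condExp.aestronglyMeasurable).symm
  rw [setIntegral_condExp (hm'.trans hm₂) ((integrable_const 1).indicator (hm₁ s hs)) hr]
  exact (h.setIntegral_condExp_indicator hm₁ hm₂ hs (hm' r hr)).symm

lemma condIndep_of_forall_setIntegral_condExp_indicator (hm₁ : m₁ ≤ mΩ) (hm₂ : m₂ ≤ mΩ)
    (hle : m ≤ m₂)
    (h : ∀ s t, MeasurableSet[m₁] s → MeasurableSet[m₂] t →
      ∫ ω in t, (μ⟦s | m⟧) ω ∂μ = ∫ ω in t, s.indicator (fun _ => (1 : ℝ)) ω ∂μ) :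
    CondIndep m m₁ m₂ hm μ := by
  refine (condIndep_iff m m₁ m₂ hm hm₁ hm₂ μ).mpr fun s t hs ht => ?_
  have hs' := hm₁ s hs
  have ht' := hm₂ t ht
  have hsm₂ : μ⟦s | m₂⟧ =ᵐ[μ] μ⟦s | m⟧ :=
    (ae_eq_condExp_of_forall_setIntegral_eq hm₂ ((integrable_const 1).indicator hs')
      (fun _ _ _ => integrable_condExp.integrableOn) (fun v hv _ => h s v hs hv)
      (stronglyMeasurable_condExp.mono hle).aestronglyMeasurable).symm
  calc μ⟦s ∩ t | m⟧
      = μ[t.indicator (s.indicator fun _ => (1 : ℝ))|m] := by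
        rw [Set.indicator_indicator, Set.inter_comm]
    _ =ᵐ[μ] μ[μ[t.indicator (s.indicator fun _ => (1 : ℝ))|m₂]|m] :=
        (condExp_condExp_of_le hle hm₂).symm
    _ =ᵐ[μ] μ[t.indicator (μ⟦s | m⟧)|m] := by
        refine condExp_congr_ae ?_
        refine (condExp_indicator ((integrable_const 1).indicator hs') ht).trans ?_
        filter_upwards [hsm₂] with ω hω
        by_cases hωt : ω ∈ t <;> simp [hωt, hω]
    _ = μ[μ⟦s | m⟧ * t.indicator fun _ => (1 : ℝ)|m] := by
        congr with ω
        by_cases hωt : ω ∈ t <;> simp [hωt]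
    _ =ᵐ[μ] μ⟦s | m⟧ * μ⟦t | m⟧ :=
        condExp_mul_of_stronglyMeasurable_left stronglyMeasurable_condExp
          (integrable_condExp.mul_bdd
            (stronglyMeasurable_const.indicator ht').aestronglyMeasurable
            (ae_of_all _ (abs_indicator_one_le_one t))) ((integrable_const 1).indicator ht')

lemma CondIndep.trans_of_le {m₃ : MeasurableSpace Ω} {hm₃ : m₃ ≤ mΩ}
    (h₁ : CondIndep m₃ m₁ m₂ hm₃ μ) (h₂ : CondIndep m m₃ m₂ hm μ) (hle : m ≤ m₂)
    (hm₁ : m₁ ≤ mΩ) (hm₂ : m₂ ≤ mΩ) :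
    CondIndep m m₁ m₂ hm μ := by
  refine condIndep_of_forall_setIntegral_condExp_indicator hm₁ hm₂ hle fun s v hs hv => ?_
  have h1s : Integrable (s.indicator fun _ => (1 : ℝ)) μ :=
    (integrable_const 1).indicator (hm₁ s hs)
  have h1v : Integrable (v.indicator fun _ => (1 : ℝ)) μ :=
    (integrable_const 1).indicator (hm₂ v hv)
  have h1s_le : ∀ᵐ ω ∂μ, |s.indicator (fun _ => (1 : ℝ)) ω| ≤ 1 :=
    ae_of_all _ (abs_indicator_one_le_one s)
  have h1v_le : ∀ᵐ ω ∂μ, |v.indicator (fun _ => (1 : ℝ)) ω| ≤ 1 :=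
    ae_of_all _ (abs_indicator_one_le_one v)
  calc ∫ ω in v, (μ⟦s | m⟧) ω ∂μ
      = ∫ ω, v.indicator (fun _ => (1 : ℝ)) ω * (μ⟦s | m⟧) ω ∂μ :=
        setIntegral_eq_integral_indicator_one_mul (hm₂ v hv) _
    _ = ∫ ω, v.indicator (fun _ => (1 : ℝ)) ω * μ[μ⟦s | m₃⟧|m] ω ∂μ :=
        integral_congr_ae <| Filter.EventuallyEq.rfl.mul
          (h₁.condExp_condExp_indicator hm₁ hm₂ hle hs).symm
    _ = ∫ ω, (μ⟦v | m⟧) ω * (μ⟦s | m₃⟧) ω ∂μ :=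
        integral_mul_condExp_eq_integral_condExp_mul hm h1v h1v_le integrable_condExp
          (ae_abs_condExp_indicator_le_one s)
    _ = ∫ ω, μ[μ⟦v | m⟧|m₃] ω * s.indicator (fun _ => (1 : ℝ)) ω ∂μ :=
        integral_mul_condExp_eq_integral_condExp_mul hm₃ integrable_condExp
          (ae_abs_condExp_indicator_le_one v) h1s h1s_le
    _ = ∫ ω, (μ⟦v | m₃⟧) ω * s.indicator (fun _ => (1 : ℝ)) ω ∂μ :=
        integral_congr_ae <|
          (h₂.symm.condExp_condExp_indicator hm₂ hm₃ le_rfl hv).mul Filter.EventuallyEq.rfl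
    _ = ∫ ω, v.indicator (fun _ => (1 : ℝ)) ω * (μ⟦s | m₃⟧) ω ∂μ :=
        (integral_mul_condExp_eq_integral_condExp_mul hm₃ h1v h1v_le h1s h1s_le).symm
    _ = ∫ ω in v, (μ⟦s | m₃⟧) ω ∂μ :=
        (setIntegral_eq_integral_indicator_one_mul (hm₂ v hv) _).symm
    _ = ∫ ω in v, s.indicator (fun _ => (1 : ℝ)) ω ∂μ :=
        h₁.setIntegral_condExp_indicator hm₁ hm₂ hs hv

end ProbabilityTheory

/-- If `W ⊥ Z | U` and `U ⊥ Z | T` where `T = τ(Z)` is a measurable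
function of `Z`, then `W ⊥ Z | T`. -/
theorem conditional_independence_transfer
    {Ω 𝓤 𝓩 𝓦 𝓣 : Type*} [MeasurableSpace Ω] [StandardBorelSpace Ω]
    [MeasurableSpace 𝓤] [MeasurableSpace 𝓩] [MeasurableSpace 𝓦] [MeasurableSpace 𝓣]
    (μ : Measure Ω) [IsProbabilityMeasure μ]
    (U : Ω → 𝓤) (Z : Ω → 𝓩) (W : Ω → 𝓦) (τ : 𝓩 → 𝓣)
    (hU : Measurable U) (hZ : Measurable Z) (hW : Measurable W) (hτ : Measurable τ)
    (hWZU : CondIndepFun (MeasurableSpace.comap U inferInstance) hU.comap_le W Z μ)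
    (hUZT : CondIndepFun (MeasurableSpace.comap (fun ω => τ (Z ω)) inferInstance)
      ((hτ.comp hZ).comap_le) U Z μ) :
    CondIndepFun (MeasurableSpace.comap (fun ω => τ (Z ω)) inferInstance)
      ((hτ.comp hZ).comap_le) W Z μ := by
  have hTZ : MeasurableSpace.comap (fun ω => τ (Z ω)) inferInstance ≤
      MeasurableSpace.comap Z inferInstance :=
    (hτ.comp (comap_measurable Z)).comap_le
  rw [condIndepFun_iff_condIndep] at hWZU hUZT ⊢
  exact hWZU.trans_of_le hUZT hTZ hW.comap_le hZ.comap_le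
end

section
/- Let U, Z, W be discrete random variables with W conditionally independent of Z given U, and suppose W is complete for U (i.e., for any bounded function g, E[g(U) | W] = 0 almost surely implies g(U) = 0 almost surely). If T = τ(Z) is a measurable function of Z such that W is conditionally independent of Z given T, then U is conditionally independent of Z given T. -/
-- Probability of an event on a finite probability space with weights `p`.
open Classical in
noncomputable def pr {Ω : Type*} [Fintype Ω] (p : Ω → ℝ) (E : Ω → Prop) : ℝ :=
  ∑ ω, if E ω then p ω else 0

-- `∑_{ω ∈ E} p ω * f ω`, the unnormalized conditional expectation of `f` on event `E`.
open Classical in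
noncomputable def cex {Ω : Type*} [Fintype Ω] (p : Ω → ℝ) (f : Ω → ℝ) (E : Ω → Prop) : ℝ :=
  ∑ ω, if E ω then p ω * f ω else 0

/-!
Fix `z` and `t = τ z`, and put `B = {Z = z} ⊆ D = {T = t}`. Summing `W ⊥ Z | U` over the fibre
`τ⁻¹ t` gives `W ⊥ T | U`, so for the test function
`g u = P(D) P(B | U = u) - P(B) P(D | U = u)` the tower property yields
`E[g(U); W = w] = P(D) P(W = w, B) - P(B) P(W = w, D)`, which vanishes by `W ⊥ Z | T`.
Completeness forces `g = 0` on the range of `U`, and `g u = 0` is exactly `U ⊥ Z | T` at `u`.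
-/

open Finset

noncomputable def condPr {Ω : Type*} [Fintype Ω] (p : Ω → ℝ) (B C : Ω → Prop) : ℝ :=
  pr p (fun ω => B ω ∧ C ω) / pr p C

def CondIndepEvents {Ω : Type*} [Fintype Ω] (p : Ω → ℝ) (A B C : Ω → Prop) : Prop :=
  pr p (fun ω => A ω ∧ B ω ∧ C ω) * pr p C = pr p (fun ω => A ω ∧ C ω) * pr p (fun ω => B ω ∧ C ω)

section Finite

variable {Ω : Type*} [Fintype Ω] (p : Ω → ℝ)

lemma pr_congr {E F : Ω → Prop} (h : ∀ ω, E ω ↔ F ω) : pr p E = pr p F := by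
  rw [funext fun ω => propext (h ω)]

lemma pr_eq_zero {E : Ω → Prop} (h : ∀ ω, ¬ E ω) : pr p E = 0 :=
  sum_eq_zero fun ω _ => if_neg (h ω)

open Classical in
lemma pr_and_eq_sum_filter {X : Type*} (f : Ω → X) (q : X → Prop) (E : Ω → Prop) :
    pr p (fun ω => q (f ω) ∧ E ω) =
      ∑ x ∈ (univ.image f).filter q, pr p (fun ω => f ω = x ∧ E ω) := by
  unfold pr
  rw [sum_comm]
  refine sum_congr rfl fun ω _ => ?_
  by_cases hq : q (f ω) <;> by_cases hE : E ω <;> simp [hq, hE]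

open Classical in
lemma pr_eq_sum_image {X : Type*} (f : Ω → X) (E : Ω → Prop) :
    pr p E = ∑ x ∈ univ.image f, pr p (fun ω => f ω = x ∧ E ω) := by
  simpa using pr_and_eq_sum_filter p f (fun _ => True) E

open Classical in
lemma cex_comp_eq_sum {X : Type*} (f : Ω → X) (g : X → ℝ) (E : Ω → Prop) :
    cex p (fun ω => g (f ω)) E = ∑ x ∈ univ.image f, g x * pr p (fun ω => E ω ∧ f ω = x) := by
  unfold cex pr
  simp_rw [mul_sum]
  rw [sum_comm]
  refine sum_congr rfl fun ω _ => ?_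
  by_cases hE : E ω <;> simp [hE, mul_comm]

lemma CondIndepEvents.of_forall_not_and {A B C : Ω → Prop} (h : ∀ ω, ¬ (B ω ∧ C ω)) :
    CondIndepEvents p A B C := by
  unfold CondIndepEvents
  rw [pr_eq_zero p fun ω hω => h ω hω.2, pr_eq_zero p h, zero_mul, mul_zero]

lemma condIndepEvents_iff_of_imp {A B D : Ω → Prop} (hBD : ∀ ω, B ω → D ω) :
    CondIndepEvents p A B D ↔
      pr p (fun ω => A ω ∧ B ω) * pr p D = pr p (fun ω => A ω ∧ D ω) * pr p B := by
  unfold CondIndepEvents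
  rw [pr_congr p fun ω => and_iff_left_of_imp (hBD ω),
    pr_congr p fun ω => and_congr_right fun _ => and_iff_left_of_imp (hBD ω)]

lemma CondIndepEvents.pr_and_mul_condPr {A B C : Ω → Prop} (h : CondIndepEvents p A B C)
    (hC : pr p C ≠ 0) :
    pr p (fun ω => A ω ∧ C ω) * condPr p B C = pr p (fun ω => A ω ∧ B ω ∧ C ω) := by
  rw [condPr, mul_div_assoc', div_eq_iff hC]
  exact h.symm

lemma condIndepEvents_comp {X : Type*} (Z : Ω → X) (q : X → Prop) {A C : Ω → Prop}
    (h : ∀ x, CondIndepEvents p A (Z · = x) C) :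
    CondIndepEvents p A (fun ω => q (Z ω)) C := by
  classical
  have hABC : pr p (fun ω => A ω ∧ q (Z ω) ∧ C ω) =
      ∑ x ∈ (univ.image Z).filter q, pr p (fun ω => A ω ∧ Z ω = x ∧ C ω) := by
    rw [pr_congr p fun ω => and_left_comm, pr_and_eq_sum_filter]
    exact sum_congr rfl fun x _ => pr_congr p fun ω => and_left_comm
  unfold CondIndepEvents
  rw [hABC, pr_and_eq_sum_filter p Z q C, sum_mul, mul_sum]
  exact sum_congr rfl fun x _ => h x

variable {p}

lemma pr_pos (hp : ∀ ω, 0 < p ω) (E : Ω → Prop) {ω₀ : Ω} (h : E ω₀) :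
    0 < pr p E := by
  refine sum_pos' (fun ω _ => ?_) ⟨ω₀, mem_univ _, by simp [h, hp ω₀]⟩
  split_ifs
  exacts [(hp ω).le, le_rfl]

open Classical in
lemma pr_and_eq_sum_mul_condPr (hp : ∀ ω, 0 < p ω) {𝓤 : Type*} (U : Ω → 𝓤)
    {A B : Ω → Prop} (h : ∀ u, CondIndepEvents p A B (U · = u)) :
    pr p (fun ω => A ω ∧ B ω) =
      ∑ u ∈ univ.image U, pr p (fun ω => A ω ∧ U ω = u) * condPr p B (U · = u) := by
  rw [pr_eq_sum_image p U]
  refine sum_congr rfl fun u hu => ?_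
  obtain ⟨ω₀, -, rfl⟩ := mem_image.1 hu
  rw [(h (U ω₀)).pr_and_mul_condPr p (pr_pos hp (U · = U ω₀) rfl).ne']
  exact pr_congr p fun ω => and_rotate

theorem condIndepEvents_of_complete (hp : ∀ ω, 0 < p ω) {𝓤 𝓦 : Type*}
    (U : Ω → 𝓤) (W : Ω → 𝓦)
    (hcomplete : ∀ g : 𝓤 → ℝ,
      (∀ w : 𝓦, cex p (fun ω => g (U ω)) (fun ω => W ω = w) = 0) → ∀ ω, g (U ω) = 0)
    {B D : Ω → Prop} (hBD : ∀ ω, B ω → D ω)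
    (hWBU : ∀ w u, CondIndepEvents p (W · = w) B (U · = u))
    (hWDU : ∀ w u, CondIndepEvents p (W · = w) D (U · = u))
    (hWBD : ∀ w, CondIndepEvents p (W · = w) B D) (u : 𝓤) :
    CondIndepEvents p (U · = u) B D := by
  set g : 𝓤 → ℝ := fun u => pr p D * condPr p B (U · = u) - pr p B * condPr p D (U · = u)
  have hg : ∀ w, cex p (fun ω => g (U ω)) (W · = w) = 0 := fun w => by
    calc cex p (fun ω => g (U ω)) (W · = w)
        = pr p D * pr p (fun ω => W ω = w ∧ B ω) - pr p B * pr p (fun ω => W ω = w ∧ D ω) := by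
          rw [cex_comp_eq_sum, pr_and_eq_sum_mul_condPr hp U (hWBU w),
            pr_and_eq_sum_mul_condPr hp U (hWDU w), mul_sum, mul_sum, ← sum_sub_distrib]
          exact sum_congr rfl fun _ _ => by ring
      _ = 0 := by linear_combination (condIndepEvents_iff_of_imp p hBD).1 (hWBD w)
  rw [condIndepEvents_iff_of_imp p hBD]
  by_cases hu : ∃ ω, U ω = u
  · obtain ⟨ω₀, rfl⟩ := hu
    have hgu : pr p D * condPr p B (U · = U ω₀) = pr p B * condPr p D (U · = U ω₀) :=
      sub_eq_zero.1 (hcomplete g hg ω₀)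
    rw [condPr, condPr, mul_div_assoc', mul_div_assoc',
      div_left_inj' (pr_pos hp (U · = U ω₀) rfl).ne'] at hgu
    rw [pr_congr p fun ω => and_comm (a := U ω = U ω₀),
      pr_congr p fun ω => and_comm (a := U ω = U ω₀)]
    linear_combination hgu
  · push Not at hu
    rw [pr_eq_zero p (E := fun ω => U ω = u ∧ B ω) fun ω hω => hu ω hω.1,
      pr_eq_zero p (E := fun ω => U ω = u ∧ D ω) fun ω hω => hu ω hω.1, zero_mul, zero_mul]

end Finite

theorem U_indep_Z_given_T_general {Ω 𝓤 𝓩 𝓦 𝓣 : Type*} [Fintype Ω]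
    (p : Ω → ℝ) (hp : ∀ ω, 0 < p ω)
    (U : Ω → 𝓤) (Z : Ω → 𝓩) (W : Ω → 𝓦) (τ : 𝓩 → 𝓣)
    -- W ⊥ Z | U
    (hWZU : ∀ (w : 𝓦) (z : 𝓩) (u : 𝓤),
      pr p (fun ω => W ω = w ∧ Z ω = z ∧ U ω = u) * pr p (fun ω => U ω = u)
        = pr p (fun ω => W ω = w ∧ U ω = u) * pr p (fun ω => Z ω = z ∧ U ω = u))
    -- completeness of W for U: E[g(U)|W] = 0 a.s. implies g(U) = 0 a.s.
    (hcomplete : ∀ g : 𝓤 → ℝ,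
      (∀ w : 𝓦, cex p (fun ω => g (U ω)) (fun ω => W ω = w) = 0) → ∀ ω, g (U ω) = 0)
    -- W ⊥ Z | T where T = τ ∘ Z
    (hWZT : ∀ (w : 𝓦) (z : 𝓩) (t : 𝓣),
      pr p (fun ω => W ω = w ∧ Z ω = z ∧ τ (Z ω) = t) * pr p (fun ω => τ (Z ω) = t)
        = pr p (fun ω => W ω = w ∧ τ (Z ω) = t) * pr p (fun ω => Z ω = z ∧ τ (Z ω) = t)) :
    -- conclusion: U ⊥ Z | T
    ∀ (u : 𝓤) (z : 𝓩) (t : 𝓣),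
      pr p (fun ω => U ω = u ∧ Z ω = z ∧ τ (Z ω) = t) * pr p (fun ω => τ (Z ω) = t)
        = pr p (fun ω => U ω = u ∧ τ (Z ω) = t) * pr p (fun ω => Z ω = z ∧ τ (Z ω) = t) := by
  intro u z t
  by_cases hzt : τ z = t
  · have hWTU : ∀ w u, CondIndepEvents p (W · = w) (fun ω => τ (Z ω) = t) (U · = u) :=
      fun w u => condIndepEvents_comp p Z (τ · = t) fun z => hWZU w z u
    exact condIndepEvents_of_complete hp U W hcomplete (fun ω h => h ▸ hzt)
      (fun w u => hWZU w z u) hWTU (fun w => hWZT w z t) u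
  · exact CondIndepEvents.of_forall_not_and p fun ω h => hzt (h.1 ▸ h.2)

/-- with `W ⊥ Z | U`, completeness of `W` for `U`, and a function
`T = τ(Z)` with `W ⊥ Z | T`, we get `U ⊥ Z | T`.  (Discrete setting with
strictly positive probabilities; conditional independence stated via
cross-multiplied factorization of conditional pmfs.) -/
theorem U_indep_Z_given_T {Ω 𝓤 𝓩 𝓦 𝓣 : Type*} [Fintype Ω]
    (p : Ω → ℝ) (hp : ∀ ω, 0 < p ω) (hsum : ∑ ω, p ω = 1)
    (U : Ω → 𝓤) (Z : Ω → 𝓩) (W : Ω → 𝓦) (τ : 𝓩 → 𝓣)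
    -- W ⊥ Z | U
    (hWZU : ∀ (w : 𝓦) (z : 𝓩) (u : 𝓤),
      pr p (fun ω => W ω = w ∧ Z ω = z ∧ U ω = u) * pr p (fun ω => U ω = u)
        = pr p (fun ω => W ω = w ∧ U ω = u) * pr p (fun ω => Z ω = z ∧ U ω = u))
    -- completeness of W for U: E[g(U)|W] = 0 a.s. implies g(U) = 0 a.s.
    (hcomplete : ∀ g : 𝓤 → ℝ,
      (∀ w : 𝓦, cex p (fun ω => g (U ω)) (fun ω => W ω = w) = 0) → ∀ ω, g (U ω) = 0)
    -- W ⊥ Z | T where T = τ ∘ Z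
    (hWZT : ∀ (w : 𝓦) (z : 𝓩) (t : 𝓣),
      pr p (fun ω => W ω = w ∧ Z ω = z ∧ τ (Z ω) = t) * pr p (fun ω => τ (Z ω) = t)
        = pr p (fun ω => W ω = w ∧ τ (Z ω) = t) * pr p (fun ω => Z ω = z ∧ τ (Z ω) = t)) :
    -- conclusion: U ⊥ Z | T
    ∀ (u : 𝓤) (z : 𝓩) (t : 𝓣),
      pr p (fun ω => U ω = u ∧ Z ω = z ∧ τ (Z ω) = t) * pr p (fun ω => τ (Z ω) = t)
        = pr p (fun ω => U ω = u ∧ τ (Z ω) = t) * pr p (fun ω => Z ω = z ∧ τ (Z ω) = t) :=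
  U_indep_Z_given_T_general p hp U Z W τ hWZU hcomplete hWZT
end

section
/- Suppose Y = k₀(A) + ε where E[ε | Z, U] = E[ε | U], T = τ(Z) satisfies U ⊥ Z | T, and Z is complete for (A,T) in the sense that for any square-integrable g, E[g(A,T) | Z] = 0 a.s. implies g(A,T) = 0 a.s. Then any square-integrable h with E[Y | Z] = E[h(A,T) | Z] a.s. satisfies h(A,T) = k₀(A) + E[ε | T] almost surely. -/
/-!
Conditional independence `U ⊥ Z | T` with `σ(T) ⊆ σ(Z)` gives `E[φ | Z] = E[φ | T]` for every
integrable `σ(U)`-measurable `φ`. Applied to `φ = E[ε | U] = E[ε | Z, U]`, the tower property turns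
this into `E[ε | Z] = E[ε | T]`. Writing `E[ε | T] = f(T)` (Doob–Dynkin), the function
`g(a, t) = h(a, t) - k₀(a) - f(t)` satisfies
`E[g(A,T) | Z] = E[h(A,T) | Z] - E[k₀(A) | Z] - E[ε | Z] = E[h(A,T) - Y | Z] = 0`,
so completeness forces `g(A,T) = 0`.
-/

open MeasureTheory ProbabilityTheory Filter

namespace MeasureTheory

variable {Ω : Type*} {m mΩ : MeasurableSpace Ω} {μ : Measure Ω}

theorem setIntegral_eq_integral_mul_indicator_one {s : Set Ω} (hs : MeasurableSet s)
    (f : Ω → ℝ) : ∫ ω in s, f ω ∂μ = ∫ ω, f ω * s.indicator (fun _ => (1 : ℝ)) ω ∂μ := by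
  rw [← integral_indicator hs]
  congr 1 with ω
  by_cases hω : ω ∈ s <;> simp [hω]

theorem ae_norm_indicator_one_le_one (t : Set Ω) :
    ∀ᵐ ω ∂μ, ‖t.indicator (fun _ => (1 : ℝ)) ω‖ ≤ 1 :=
  ae_of_all _ fun ω => by simpa using norm_indicator_le_norm_self (fun _ => (1 : ℝ)) ω

theorem ae_norm_condExp_indicator_le_one (t : Set Ω) :
    ∀ᵐ ω ∂μ, ‖(μ⟦t | m⟧) ω‖ ≤ 1 :=
  ae_bdd_abs_condExp_of_ae_bdd_abs (ae_norm_indicator_one_le_one t)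

theorem integral_condExp_mul_of_aestronglyMeasurable_right (hm : m ≤ mΩ)
    [SigmaFinite (μ.trim hm)] {f g : Ω → ℝ} (hg : AEStronglyMeasurable[m] g μ)
    (hfg : Integrable (f * g) μ) (hf : Integrable f μ) :
    ∫ ω, μ[f | m] ω * g ω ∂μ = ∫ ω, f ω * g ω ∂μ :=
  calc ∫ ω, μ[f | m] ω * g ω ∂μ = ∫ ω, μ[f * g | m] ω ∂μ :=
        integral_congr_ae (condExp_mul_of_aestronglyMeasurable_right hg hfg hf).symm
    _ = ∫ ω, f ω * g ω ∂μ := integral_condExp hm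

theorem integral_mul_condExp_of_aestronglyMeasurable_left (hm : m ≤ mΩ)
    [SigmaFinite (μ.trim hm)] {f g : Ω → ℝ} (hf : AEStronglyMeasurable[m] f μ)
    (hfg : Integrable (f * g) μ) (hg : Integrable g μ) :
    ∫ ω, f ω * μ[g | m] ω ∂μ = ∫ ω, f ω * g ω ∂μ :=
  calc ∫ ω, f ω * μ[g | m] ω ∂μ = ∫ ω, μ[f * g | m] ω ∂μ :=
        integral_congr_ae (condExp_mul_of_aestronglyMeasurable_left hf hfg hg).symm
    _ = ∫ ω, f ω * g ω ∂μ := integral_condExp hm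

theorem condExp_sub_sub_condExp_ae_eq_zero (hm : m ≤ mΩ) [SigmaFinite (μ.trim hm)]
    {X Y ε : Ω → ℝ} (hX : Integrable X μ) (hY : Integrable Y μ) (hε : Integrable ε μ)
    (h : μ[Y + ε | m] =ᵐ[μ] μ[X | m]) : μ[X - Y - μ[ε | m] | m] =ᵐ[μ] 0 := by
  filter_upwards [condExp_sub (hX.sub hY) (integrable_condExp (f := ε)) m, condExp_sub hX hY m,
    condExp_add hY hε m, h] with ω h₁ h₂ h₃ h₄
  rw [condExp_of_stronglyMeasurable hm stronglyMeasurable_condExp integrable_condExp] at h₁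
  simp only [Pi.sub_apply, Pi.add_apply, Pi.zero_apply] at h₁ h₂ h₃ ⊢
  linarith

end MeasureTheory

namespace ProbabilityTheory

variable {Ω : Type*} {m' m₁ m₂ mΩ : MeasurableSpace Ω} [StandardBorelSpace Ω]
  {μ : Measure Ω} [IsFiniteMeasure μ] {hm' : m' ≤ mΩ}

theorem CondIndep.integral_indicator_mul_indicator (hm₁ : m₁ ≤ mΩ) (hm₂ : m₂ ≤ mΩ)
    (hindep : CondIndep m' m₁ m₂ hm' μ) {s t : Set Ω} (hs : MeasurableSet[m₁] s)
    (ht : MeasurableSet[m₂] t) :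
    ∫ ω, t.indicator (fun _ => (1 : ℝ)) ω * s.indicator (fun _ => (1 : ℝ)) ω ∂μ
      = ∫ ω, (μ⟦t | m'⟧) ω * s.indicator (fun _ => (1 : ℝ)) ω ∂μ := by
  have hprod := (condIndep_iff m' m₁ m₂ hm' hm₁ hm₂ μ).mp hindep s t hs ht
  have hs_int : Integrable (s.indicator fun _ => (1 : ℝ)) μ :=
    (integrable_const _).indicator (hm₁ s hs)
  calc ∫ ω, t.indicator (fun _ => (1 : ℝ)) ω * s.indicator (fun _ => (1 : ℝ)) ω ∂μ
      = ∫ ω, (μ⟦s ∩ t | m'⟧) ω ∂μ := by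
        rw [integral_condExp hm']
        congr 1 with ω
        by_cases hωs : ω ∈ s <;> by_cases hωt : ω ∈ t <;> simp [hωs, hωt]
    _ = ∫ ω, (μ⟦t | m'⟧) ω * (μ⟦s | m'⟧) ω ∂μ :=
        integral_congr_ae (hprod.trans (.of_eq (mul_comm _ _)))
    _ = ∫ ω, (μ⟦t | m'⟧) ω * s.indicator (fun _ => (1 : ℝ)) ω ∂μ :=
        integral_mul_condExp_of_aestronglyMeasurable_left hm'
          stronglyMeasurable_condExp.aestronglyMeasurable
          (hs_int.bdd_mul integrable_condExp.aestronglyMeasurable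
            (ae_norm_condExp_indicator_le_one t)) hs_int

theorem CondIndep.integral_mul_indicator (hm₁ : m₁ ≤ mΩ) (hm₂ : m₂ ≤ mΩ)
    (hindep : CondIndep m' m₁ m₂ hm' μ) {t : Set Ω} (ht : MeasurableSet[m₂] t) {ψ : Ω → ℝ}
    (hψm : AEStronglyMeasurable[m₁] ψ μ) (hψ : Integrable ψ μ) :
    ∫ ω, ψ ω * t.indicator (fun _ => (1 : ℝ)) ω ∂μ = ∫ ω, ψ ω * (μ⟦t | m'⟧) ω ∂μ := by
  have ht_int : Integrable (t.indicator fun _ => (1 : ℝ)) μ :=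
    (integrable_const _).indicator (hm₂ t ht)
  have hproj : μ[t.indicator (fun _ => (1 : ℝ)) | m₁] =ᵐ[μ] μ[μ⟦t | m'⟧ | m₁] := by
    refine ae_eq_condExp_of_forall_setIntegral_eq hm₁ integrable_condExp
      (fun s _ _ => integrable_condExp.integrableOn) (fun s hs _ => ?_)
      stronglyMeasurable_condExp.aestronglyMeasurable
    rw [setIntegral_condExp hm₁ ht_int hs, setIntegral_eq_integral_mul_indicator_one (hm₁ s hs),
      setIntegral_eq_integral_mul_indicator_one (hm₁ s hs)]
    exact hindep.integral_indicator_mul_indicator hm₁ hm₂ hs ht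
  calc ∫ ω, ψ ω * t.indicator (fun _ => (1 : ℝ)) ω ∂μ
      = ∫ ω, ψ ω * μ[t.indicator (fun _ => (1 : ℝ)) | m₁] ω ∂μ :=
        (integral_mul_condExp_of_aestronglyMeasurable_left hm₁ hψm
          (hψ.mul_bdd ht_int.aestronglyMeasurable (ae_norm_indicator_one_le_one t)) ht_int).symm
    _ = ∫ ω, ψ ω * μ[μ⟦t | m'⟧ | m₁] ω ∂μ := integral_congr_ae (EventuallyEq.rfl.mul hproj)
    _ = ∫ ω, ψ ω * (μ⟦t | m'⟧) ω ∂μ :=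
        integral_mul_condExp_of_aestronglyMeasurable_left hm₁ hψm
          (hψ.mul_bdd integrable_condExp.aestronglyMeasurable
            (ae_norm_condExp_indicator_le_one t)) integrable_condExp

theorem CondIndep.condExp_ae_eq_condExp_of_le (hm₁ : m₁ ≤ mΩ) (hm₂ : m₂ ≤ mΩ)
    (hm'₂ : m' ≤ m₂) (hindep : CondIndep m' m₁ m₂ hm' μ) {ψ : Ω → ℝ}
    (hψm : AEStronglyMeasurable[m₁] ψ μ) (hψ : Integrable ψ μ) :
    μ[ψ | m₂] =ᵐ[μ] μ[ψ | m'] := by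
  refine (ae_eq_condExp_of_forall_setIntegral_eq hm₂ hψ
    (fun t _ _ => integrable_condExp.integrableOn) (fun t ht _ => ?_)
    (stronglyMeasurable_condExp.mono hm'₂).aestronglyMeasurable).symm
  have ht_int : Integrable (t.indicator fun _ => (1 : ℝ)) μ :=
    (integrable_const _).indicator (hm₂ t ht)
  rw [setIntegral_eq_integral_mul_indicator_one (hm₂ t ht),
    setIntegral_eq_integral_mul_indicator_one (hm₂ t ht)]
  calc ∫ ω, μ[ψ | m'] ω * t.indicator (fun _ => (1 : ℝ)) ω ∂μ
      = ∫ ω, μ[ψ | m'] ω * (μ⟦t | m'⟧) ω ∂μ :=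
        (integral_mul_condExp_of_aestronglyMeasurable_left hm'
          stronglyMeasurable_condExp.aestronglyMeasurable
          (integrable_condExp.mul_bdd ht_int.aestronglyMeasurable
            (ae_norm_indicator_one_le_one t)) ht_int).symm
    _ = ∫ ω, ψ ω * (μ⟦t | m'⟧) ω ∂μ :=
        integral_condExp_mul_of_aestronglyMeasurable_right hm'
          stronglyMeasurable_condExp.aestronglyMeasurable
          (hψ.mul_bdd integrable_condExp.aestronglyMeasurable
            (ae_norm_condExp_indicator_le_one t)) hψ
    _ = ∫ ω, ψ ω * t.indicator (fun _ => (1 : ℝ)) ω ∂μ :=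
        (hindep.integral_mul_indicator hm₁ hm₂ ht hψm hψ).symm

theorem CondIndep.condExp_ae_eq_condExp_of_condExp_ae_eq {m₃ : MeasurableSpace Ω}
    (hm₁ : m₁ ≤ mΩ) (hm₃ : m₃ ≤ mΩ) (hm₂₃ : m₂ ≤ m₃) (hm'₂ : m' ≤ m₂)
    (hindep : CondIndep m' m₁ m₂ hm' μ) {ε : Ω → ℝ} (hε : μ[ε | m₃] =ᵐ[μ] μ[ε | m₁]) :
    μ[ε | m₂] =ᵐ[μ] μ[ε | m'] :=
  calc μ[ε | m₂] =ᵐ[μ] μ[μ[ε | m₃] | m₂] := (condExp_condExp_of_le hm₂₃ hm₃).symm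
    _ =ᵐ[μ] μ[μ[ε | m₁] | m₂] := condExp_congr_ae hε
    _ =ᵐ[μ] μ[μ[ε | m₁] | m'] :=
        hindep.condExp_ae_eq_condExp_of_le hm₁ (hm₂₃.trans hm₃) hm'₂
          stronglyMeasurable_condExp.aestronglyMeasurable integrable_condExp
    _ =ᵐ[μ] μ[μ[ε | m₃] | m'] := condExp_congr_ae hε.symm
    _ =ᵐ[μ] μ[ε | m'] := condExp_condExp_of_le (hm'₂.trans hm₂₃) hm₃

end ProbabilityTheory

theorem linearly_separable_identification_general
    {Ω 𝓐 𝓩 𝓤 𝓣 : Type*} [MeasurableSpace Ω] [StandardBorelSpace Ω]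
    [MeasurableSpace 𝓐] [MeasurableSpace 𝓩] [MeasurableSpace 𝓤] [MeasurableSpace 𝓣]
    (μ : Measure Ω) [IsProbabilityMeasure μ]
    (A : Ω → 𝓐) (Z : Ω → 𝓩) (U : Ω → 𝓤) (τ : 𝓩 → 𝓣) (ε Y : Ω → ℝ)
    (k₀ : 𝓐 → ℝ) (h : 𝓐 × 𝓣 → ℝ)
    (hZ : Measurable Z) (hU : Measurable U) (hτ : Measurable τ)
    (hεL2 : MemLp ε 2 μ)
    (hkL2 : MemLp (fun ω => k₀ (A ω)) 2 μ)
    (hhL2 : MemLp (fun ω => h (A ω, τ (Z ω))) 2 μ)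
    -- outcome model
    (hY : Y = fun ω => k₀ (A ω) + ε ω)
    -- instrument exogeneity conditional on U : E[ε | Z, U] = E[ε | U]
    (hexog : μ[ε | MeasurableSpace.comap (fun ω => (Z ω, U ω)) inferInstance]
        =ᵐ[μ] μ[ε | MeasurableSpace.comap U inferInstance])
    -- index sufficiency: U ⊥ Z | T
    (hUZT : CondIndepFun (MeasurableSpace.comap (fun ω => τ (Z ω)) inferInstance)
        ((hτ.comp hZ).comap_le) U Z μ)
    -- completeness of Z for (A, T)
    (hcomplete : ∀ g : 𝓐 × 𝓣 → ℝ, MemLp (fun ω => g (A ω, τ (Z ω))) 2 μ →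
        μ[(fun ω => g (A ω, τ (Z ω))) | MeasurableSpace.comap Z inferInstance] =ᵐ[μ] 0 →
        (fun ω => g (A ω, τ (Z ω))) =ᵐ[μ] 0)
    -- the conditional moment restriction satisfied by h
    (hmatch : μ[Y | MeasurableSpace.comap Z inferInstance]
        =ᵐ[μ] μ[(fun ω => h (A ω, τ (Z ω))) | MeasurableSpace.comap Z inferInstance]) :
    (fun ω => h (A ω, τ (Z ω)))
      =ᵐ[μ] fun ω =>
        k₀ (A ω) + (μ[ε | MeasurableSpace.comap (fun ω => τ (Z ω)) inferInstance]) ω := by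
  subst hY
  set mZ : MeasurableSpace Ω := MeasurableSpace.comap Z inferInstance
  set mT : MeasurableSpace Ω := MeasurableSpace.comap (fun ω => τ (Z ω)) inferInstance
  have hTZ : mT ≤ mZ := (hτ.comp (comap_measurable Z)).comap_le
  have hZZU : mZ ≤ MeasurableSpace.comap (fun ω => (Z ω, U ω)) inferInstance :=
    Measurable.comap_le (f := Z) (measurable_fst.comp (comap_measurable _))
  have hεZ : μ[ε | mZ] =ᵐ[μ] μ[ε | mT] :=
    ((condIndepFun_iff_condIndep _ _ _ _ _).mp hUZT).condExp_ae_eq_condExp_of_condExp_ae_eq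
      hU.comap_le (hZ.prodMk hU).comap_le hZZU hTZ hexog
  obtain ⟨f, -, hf⟩ :=
    (stronglyMeasurable_condExp (m := mT) (f := ε) (μ := μ)).exists_eq_measurable_comp
  have hfT : μ[ε | mT] = fun ω => f (τ (Z ω)) := hf
  have hg := hcomplete (fun p => h p - k₀ p.1 - f p.2)
    ((hhL2.sub hkL2).sub (hfT ▸ hεL2.condExp one_le_two))
    ((condExp_congr_ae (EventuallyEq.rfl.sub (hεZ.trans (.of_eq hfT)).symm)).trans
      (condExp_sub_sub_condExp_ae_eq_zero hZ.comap_le (hhL2.integrable one_le_two)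
        (hkL2.integrable one_le_two) (hεL2.integrable one_le_two) hmatch))
  filter_upwards [hg] with ω hω
  rw [hfT]
  simp only [Pi.zero_apply] at hω
  linarith

/-- in the linearly separable outcome model `Y = k₀(A) + ε` with
`E[ε | Z, U] = E[ε | U]`, index sufficiency `U ⊥ Z | T` for `T = τ(Z)`, and
completeness of `Z` for `(A, T)`, any square-integrable `h` with
`E[Y | Z] = E[h(A,T) | Z]` a.s. satisfies `h(A,T) = k₀(A) + E[ε | T]` a.s. -/
theorem linearly_separable_identification
    {Ω 𝓐 𝓩 𝓤 𝓣 : Type*} [MeasurableSpace Ω] [StandardBorelSpace Ω]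
    [MeasurableSpace 𝓐] [MeasurableSpace 𝓩] [MeasurableSpace 𝓤] [MeasurableSpace 𝓣]
    (μ : Measure Ω) [IsProbabilityMeasure μ]
    (A : Ω → 𝓐) (Z : Ω → 𝓩) (U : Ω → 𝓤) (τ : 𝓩 → 𝓣) (ε Y : Ω → ℝ)
    (k₀ : 𝓐 → ℝ) (h : 𝓐 × 𝓣 → ℝ)
    (hA : Measurable A) (hZ : Measurable Z) (hU : Measurable U) (hτ : Measurable τ)
    (hεL2 : MemLp ε 2 μ) (hYL2 : MemLp Y 2 μ)
    (hkL2 : MemLp (fun ω => k₀ (A ω)) 2 μ)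
    (hhL2 : MemLp (fun ω => h (A ω, τ (Z ω))) 2 μ)
    -- outcome model
    (hY : Y = fun ω => k₀ (A ω) + ε ω)
    -- instrument exogeneity conditional on U : E[ε | Z, U] = E[ε | U]
    (hexog : μ[ε | MeasurableSpace.comap (fun ω => (Z ω, U ω)) inferInstance]
        =ᵐ[μ] μ[ε | MeasurableSpace.comap U inferInstance])
    -- index sufficiency: U ⊥ Z | T
    (hUZT : CondIndepFun (MeasurableSpace.comap (fun ω => τ (Z ω)) inferInstance)
        ((hτ.comp hZ).comap_le) U Z μ)
    -- completeness of Z for (A, T)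
    (hcomplete : ∀ g : 𝓐 × 𝓣 → ℝ, MemLp (fun ω => g (A ω, τ (Z ω))) 2 μ →
        μ[(fun ω => g (A ω, τ (Z ω))) | MeasurableSpace.comap Z inferInstance] =ᵐ[μ] 0 →
        (fun ω => g (A ω, τ (Z ω))) =ᵐ[μ] 0)
    -- the conditional moment restriction satisfied by h
    (hmatch : μ[Y | MeasurableSpace.comap Z inferInstance]
        =ᵐ[μ] μ[(fun ω => h (A ω, τ (Z ω))) | MeasurableSpace.comap Z inferInstance]) :
    (fun ω => h (A ω, τ (Z ω)))
      =ᵐ[μ] fun ω =>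
        k₀ (A ω) + (μ[ε | MeasurableSpace.comap (fun ω => τ (Z ω)) inferInstance]) ω :=
  linearly_separable_identification_general μ A Z U τ ε Y k₀ h hZ hU hτ hεL2 hkL2 hhL2 hY hexog hUZT
    hcomplete hmatch
end

section
/- Let Z, U, W be mean-zero random row vectors with Σ_ZW = γ_Zᵀ Σ_U γ_W for matrices γ_Z, γ_W with γ_W γ_Wᵀ invertible, and suppose Σ_UW = Σ_U γ_W and Σ_UZ = Σ_U γ_Z. Let C_Z C_Wᵀ = Σ_ZW be any factorization with C_Z of full column rank d_U, and let M := I - Σ_Z^{-1} C_Z (C_Zᵀ Σ_Z^{-1} C_Z)^{-1} C_Zᵀ. Then for any matrix D, the orthogonalized instrument Z̃ := Z M D satisfies Σ_W Z̃ = 0. -/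
open Matrix

/-! Since `Σ_WZ = C_W C_Zᵀ`, it suffices that `C_Zᵀ M = 0`. Full column rank of `C_Z` makes the
Gram matrix `C_Zᵀ Σ_Z⁻¹ C_Z` positive definite, hence invertible, and then
`C_Zᵀ M = C_Zᵀ - (C_Zᵀ Σ_Z⁻¹ C_Z)(C_Zᵀ Σ_Z⁻¹ C_Z)⁻¹ C_Zᵀ = 0`. -/

namespace Matrix

variable {n k : Type*}

theorem mulVec_injective_of_rank_eq_card [Fintype k] {R : Type*} [Field R] {A : Matrix n k R}
    (h : A.rank = Fintype.card k) : Function.Injective A.mulVec := by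
  rw [mulVec_injective_iff, linearIndependent_iff_card_eq_finrank_span, ← h,
    rank_eq_finrank_span_cols]
  rfl

theorem PosDef.transpose_mul_mul_same [Fintype n] [Fintype k] {A : Matrix n n ℝ}
    {B : Matrix n k ℝ} (hA : A.PosDef) (hB : Function.Injective B.mulVec) : (Bᵀ * A * B).PosDef := by
  simpa only [conjTranspose_eq_transpose_of_trivial] using hA.conjTranspose_mul_mul_same hB

variable [Fintype n] [Fintype k] [DecidableEq n] [DecidableEq k] {R : Type*} [CommRing R]

/-- The paper's `M`, with `A = Σ_Z⁻¹`. -/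
noncomputable def obliqueAnnihilator (A : Matrix n n R) (C : Matrix n k R) : Matrix n n R :=
  1 - A * C * (Cᵀ * A * C)⁻¹ * Cᵀ

theorem transpose_mul_obliqueAnnihilator {A : Matrix n n R} {C : Matrix n k R}
    (hG : IsUnit (Cᵀ * A * C).det) : Cᵀ * obliqueAnnihilator A C = 0 := by
  have hassoc : Cᵀ * (A * C * (Cᵀ * A * C)⁻¹ * Cᵀ) = Cᵀ * A * C * (Cᵀ * A * C)⁻¹ * Cᵀ := by
    simp only [Matrix.mul_assoc]
  rw [obliqueAnnihilator, Matrix.mul_sub, Matrix.mul_one, hassoc, mul_nonsing_inv _ hG,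
    Matrix.one_mul, sub_self]

end Matrix

section CrossCovariance

variable {Ω ι κ ν : Type*} [Fintype Ω] [Fintype κ] {R : Type*} [CommSemiring R]

/-- `Σ_XY = E[Xᵀ Y]` for the finite distribution `p`. -/
def crossCov (p : Ω → R) (X : Ω → ι → R) (Y : Ω → κ → R) : Matrix ι κ R :=
  Matrix.of fun i j => ∑ ω, p ω * X ω i * Y ω j

theorem crossCov_vecMul_right (p : Ω → R) (X : Ω → ι → R) (Y : Ω → κ → R)
    (A : Matrix κ ν R) :
    crossCov p X (fun ω => Y ω ᵥ* A) = crossCov p X Y * A := by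
  ext i j
  simp only [crossCov, of_apply, mul_apply, vecMul, dotProduct, Finset.mul_sum, Finset.sum_mul]
  rw [Finset.sum_comm]
  simp only [mul_assoc]

end CrossCovariance

theorem orthogonalized_instrument_uncorrelated_general
    {Ω : Type*} [Fintype Ω] {dU dZ dW m : ℕ}
    (p : Ω → ℝ)
    (Z : Ω → Fin dZ → ℝ) (W : Ω → Fin dW → ℝ)
    (CZ : Matrix (Fin dZ) (Fin dU) ℝ) (CW : Matrix (Fin dW) (Fin dU) ℝ)
    (D : Matrix (Fin dZ) (Fin m) ℝ)
    -- Σ_Z is positive definite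
    (hSZpd : (Matrix.of fun j j' => ∑ ω, p ω * Z ω j * Z ω j' :
        Matrix (Fin dZ) (Fin dZ) ℝ).PosDef)
    -- C_Z has full column rank d_U
    (hrank : CZ.rank = dU)
    -- factorization of the cross-covariance: Σ_WZ = C_W C_Zᵀ
    (hfact : (Matrix.of fun k j => ∑ ω, p ω * W ω k * Z ω j) = CW * CZᵀ) :
    -- Σ_W Z̃ = 0 for Z̃ := Z M D
    (Matrix.of fun k j => ∑ ω, p ω * W ω k *
        Matrix.vecMul (Z ω)
          (((1 : Matrix (Fin dZ) (Fin dZ) ℝ) -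
              (Matrix.of fun j j' => ∑ ω', p ω' * Z ω' j * Z ω' j')⁻¹ * CZ *
                (CZᵀ * (Matrix.of fun j j' => ∑ ω', p ω' * Z ω' j * Z ω' j')⁻¹ * CZ)⁻¹ * CZᵀ)
            * D) j)
      = (0 : Matrix (Fin dW) (Fin m) ℝ) := by
  change (crossCov p Z Z).PosDef at hSZpd
  change crossCov p W Z = CW * CZᵀ at hfact
  change crossCov p W (fun ω => Z ω ᵥ* (obliqueAnnihilator (crossCov p Z Z)⁻¹ CZ * D)) = 0
  have hgram : (CZᵀ * (crossCov p Z Z)⁻¹ * CZ).PosDef :=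
    hSZpd.inv.transpose_mul_mul_same
      (mulVec_injective_of_rank_eq_card (by rw [hrank, Fintype.card_fin]))
  rw [crossCov_vecMul_right, hfact, ← Matrix.mul_assoc, Matrix.mul_assoc CW,
    transpose_mul_obliqueAnnihilator ((isUnit_iff_isUnit_det _).mp hgram.isUnit),
    Matrix.mul_zero, Matrix.zero_mul]

/-- with `Σ_WZ = C_W C_Zᵀ` for `C_Z` of full column rank `d_U`, and
`M := I − Σ_Z⁻¹ C_Z (C_Zᵀ Σ_Z⁻¹ C_Z)⁻¹ C_Zᵀ`, the orthogonalized instrument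
`Z̃ := Z M D` is uncorrelated with `W`: `Σ_W Z̃ = 0`, for any matrix `D`.
(Expectations on a finite probability space; Σ_XY := E[XᵀY].) -/
theorem orthogonalized_instrument_uncorrelated
    {Ω : Type*} [Fintype Ω] {dU dZ dW m : ℕ}
    (p : Ω → ℝ) (hp : ∀ ω, 0 ≤ p ω) (hsum : ∑ ω, p ω = 1)
    (Z : Ω → Fin dZ → ℝ) (W : Ω → Fin dW → ℝ)
    (CZ : Matrix (Fin dZ) (Fin dU) ℝ) (CW : Matrix (Fin dW) (Fin dU) ℝ)
    (D : Matrix (Fin dZ) (Fin m) ℝ)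
    -- mean zero
    (hZ0 : ∀ j, ∑ ω, p ω * Z ω j = 0)
    (hW0 : ∀ k, ∑ ω, p ω * W ω k = 0)
    -- Σ_Z is positive definite
    (hSZpd : (Matrix.of fun j j' => ∑ ω, p ω * Z ω j * Z ω j' :
        Matrix (Fin dZ) (Fin dZ) ℝ).PosDef)
    -- C_Z has full column rank d_U
    (hrank : CZ.rank = dU)
    -- factorization of the cross-covariance: Σ_WZ = C_W C_Zᵀ
    (hfact : (Matrix.of fun k j => ∑ ω, p ω * W ω k * Z ω j) = CW * CZᵀ) :
    -- Σ_W Z̃ = 0 for Z̃ := Z M D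
    (Matrix.of fun k j => ∑ ω, p ω * W ω k *
        Matrix.vecMul (Z ω)
          (((1 : Matrix (Fin dZ) (Fin dZ) ℝ) -
              (Matrix.of fun j j' => ∑ ω', p ω' * Z ω' j * Z ω' j')⁻¹ * CZ *
                (CZᵀ * (Matrix.of fun j j' => ∑ ω', p ω' * Z ω' j * Z ω' j')⁻¹ * CZ)⁻¹ * CZᵀ)
            * D) j)
      = (0 : Matrix (Fin dW) (Fin m) ℝ) :=
  orthogonalized_instrument_uncorrelated_general p Z W CZ CW D hSZpd hrank hfact
end

section
/- Let 𝒯 ⊆ L²(Z) be a closed subspace and suppose θ₀ = E[m(O; τ₀)] for all τ₀ in a set 𝒯_valid, where τ ↦ E[m(O;τ)] is a continuous linear functional on 𝒯 with Riesz representer α, i.e. E[m(O;τ)] = E[α(Z)τ(Z)] for all τ ∈ 𝒯. Define q₀(W) := E[ξ₀(Z) | W] for any ξ₀ ∈ 𝒯 satisfying Π_𝒯[E[ξ₀(Z)|W] | Z] = α(Z), and define ψ(O; τ, q) := m(O;τ) + q(W)(g₀(Z) − τ(Z)) where g₀ satisfies E[g₀(Z)|W] = E[τ₀(Z)|W] for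 all τ₀ ∈ 𝒯_valid. Then for any τ ∈ 𝒯 and q ∈ L²(W): E[ψ(O;τ,q)] − θ₀ = −E[(q(W) − q₀(W))(τ(Z) − τ₀(Z))]. -/
/-! Because `q` is `W`-measurable, it pairs identically with `g₀` and `τ₀`, which have the same
conditional expectation given `W`; because `τ - τ₀ ∈ 𝒯`, the representer `α = Π_𝒯 q₀` pairs with
it as `q₀` does. What remains is bilinearity of the inner product. -/

namespace LinearMap.IsSymmetric

open scoped InnerProductSpace

variable {𝕜 E : Type*} [RCLike 𝕜] [NormedAddCommGroup E] [InnerProductSpace 𝕜 E]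
  {T : E →ₗ[𝕜] E}

theorem inner_map_left_of_map_eq_self (hT : T.IsSymmetric) {y : E} (hy : T y = y) (x : E) :
    ⟪T x, y⟫_𝕜 = ⟪x, y⟫_𝕜 := by
  rw [hT, hy]

theorem inner_eq_of_map_eq (hT : T.IsSymmetric) {x y y' : E} (hx : T x = x)
    (hy : T y = T y') : ⟪x, y⟫_𝕜 = ⟪x, y'⟫_𝕜 := by
  rw [← hx, hT, hy, ← hT, hx]

end LinearMap.IsSymmetric

open RealInnerProductSpace

/-- `H` plays the role of `L²(Ω)`; `EW` (conditional expectation given `W`) and `PT` (orthogonal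
projection onto `𝒯`) are encoded as symmetric linear maps, and `⟪α, τ⟫ + ⟪q, g₀ - τ⟫` is
`E[ψ(O;τ,q)]`. -/
theorem debiased_moment_error_identity_general
    {H : Type*} [NormedAddCommGroup H] [InnerProductSpace ℝ H]
    (EW PT : H →ₗ[ℝ] H)
    (hEWsa : ∀ x y, ⟪EW x, y⟫ = ⟪x, EW y⟫)
    (hPTsa : ∀ x y, ⟪PT x, y⟫ = ⟪x, PT y⟫)
    (α τ τ₀ g₀ ξ₀ q q₀ : H) (θ₀ : ℝ)
    (hτ : PT τ = τ) (hτ₀ : PT τ₀ = τ₀)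
    (hg₀ : EW g₀ = EW τ₀)
    (hξ₀ : PT (EW ξ₀) = α) (hq₀ : q₀ = EW ξ₀)
    (hq : EW q = q)
    (hθ : θ₀ = ⟪α, τ₀⟫) :
    (⟪α, τ⟫ + ⟪q, g₀ - τ⟫) - θ₀ = -⟪q - q₀, τ - τ₀⟫ := by
  have hq_g₀ : ⟪q, g₀⟫ = ⟪q, τ₀⟫ := LinearMap.IsSymmetric.inner_eq_of_map_eq hEWsa hq hg₀
  have hα_q₀ : ⟪α, τ - τ₀⟫ = ⟪q₀, τ - τ₀⟫ := by
    rw [← hξ₀, ← hq₀]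
    exact LinearMap.IsSymmetric.inner_map_left_of_map_eq_self hPTsa (by rw [map_sub, hτ, hτ₀]) q₀
  calc (⟪α, τ⟫ + ⟪q, g₀ - τ⟫) - θ₀ = ⟪α, τ - τ₀⟫ - ⟪q, τ - τ₀⟫ := by
        rw [hθ, inner_sub_right, inner_sub_right, inner_sub_right, hq_g₀]; ring
    _ = ⟪q₀, τ - τ₀⟫ - ⟪q, τ - τ₀⟫ := by rw [hα_q₀]
    _ = -⟪q - q₀, τ - τ₀⟫ := by rw [inner_sub_left]; ring

/-- error identity for the debiased moment.
`H` plays the role of `L²(Ω)`.  `EW` is the conditional expectation given `W`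
(the orthogonal projection onto `L²(W)`), and `PT` the orthogonal projection onto
the closed subspace `𝒯 ⊆ L²(Z)`; projections are encoded as self-adjoint
idempotent linear maps.  `α` is the Riesz representer of `τ ↦ E[m(O;τ)]` on `𝒯`
(so `E[m(O;τ)] = ⟪α, τ⟫` for `τ ∈ 𝒯`), `q₀ = E[ξ₀(Z)|W]` with
`Π_𝒯[E[ξ₀(Z)|W]|Z] = α`, `g₀` satisfies `E[g₀(Z)|W] = E[τ₀(Z)|W]`, and
`E[ψ(O;τ,q)] = ⟪α,τ⟫ + ⟪q, g₀ − τ⟫`.  Then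
`E[ψ(O;τ,q)] − θ₀ = −E[(q − q₀)(τ − τ₀)]`. -/
theorem debiased_moment_error_identity
    {H : Type*} [NormedAddCommGroup H] [InnerProductSpace ℝ H]
    (EW PT : H →ₗ[ℝ] H)
    (hEWidem : ∀ x, EW (EW x) = EW x) (hEWsa : ∀ x y, ⟪EW x, y⟫ = ⟪x, EW y⟫)
    (hPTidem : ∀ x, PT (PT x) = PT x) (hPTsa : ∀ x y, ⟪PT x, y⟫ = ⟪x, PT y⟫)
    (α τ τ₀ g₀ ξ₀ q q₀ : H) (θ₀ : ℝ)
    (hα : PT α = α) (hτ : PT τ = τ) (hτ₀ : PT τ₀ = τ₀)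
    (hg₀ : EW g₀ = EW τ₀)
    (hξ₀ : PT (EW ξ₀) = α) (hq₀ : q₀ = EW ξ₀)
    (hq : EW q = q)
    (hθ : θ₀ = ⟪α, τ₀⟫) :
    (⟪α, τ⟫ + ⟪q, g₀ - τ⟫) - θ₀ = -⟪q - q₀, τ - τ₀⟫ :=
  debiased_moment_error_identity_general EW PT hEWsa hPTsa α τ τ₀ g₀ ξ₀ q q₀ θ₀ hτ hτ₀ hg₀ hξ₀ hq₀
    hq hθ
end

section
/- Under the same setting as the debiased moment result, the estimate error satisfies the bound |E[ψ(O;τ,q)] − θ₀| ≤ min{ ‖E[τ−τ₀ | W]‖₂ · ‖q − q₀‖₂ , ‖τ − τ₀‖₂ · ‖Π_𝒯[E[q − q₀ | Z]]‖₂ } for τ₀ ∈ 𝒯_valid and q₀ ∈ 𝒬₀. -/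
/-!
Both nuisance errors enter the moment only through the single inner product
`⟪q - q₀, τ - τ₀⟫`: the `W`-measurability of `q` and `E[g₀|W] = E[τ₀|W]` turn the correction
term into `⟪q, τ₀ - τ⟫`, and since `Π_𝒯 q₀ = α` while `τ - τ₀ ∈ 𝒯`, the Riesz representer may be
replaced by `q₀`. That inner product is unchanged when `τ - τ₀` is replaced by `E[τ - τ₀|W]`
(as `q - q₀` is `W`-measurable) or `q - q₀` by `Π_𝒯(q - q₀)` (as `τ - τ₀ ∈ 𝒯`), and
Cauchy–Schwarz bounds each of the two forms.
-/

open RealInnerProductSpace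

namespace LinearMap.IsSymmetric

variable {H : Type*} [NormedAddCommGroup H] [InnerProductSpace ℝ H] {T : H →ₗ[ℝ] H}

theorem inner_map_right_of_apply_eq (hT : T.IsSymmetric) {x : H} (hx : T x = x) (y : H) :
    ⟪x, T y⟫ = ⟪x, y⟫ := by
  rw [← hT, hx]

theorem abs_inner_le_norm_mul_norm_map (hT : T.IsSymmetric) {x : H} (hx : T x = x) (y : H) :
    |⟪x, y⟫| ≤ ‖x‖ * ‖T y‖ := by
  rw [← hT.inner_map_right_of_apply_eq hx]
  exact abs_real_inner_le_norm x (T y)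

end LinearMap.IsSymmetric

section DebiasedMoment

variable {H : Type*} [NormedAddCommGroup H] [InnerProductSpace ℝ H] {EW PT : H →ₗ[ℝ] H}

theorem debiased_moment_error_eq (hEW : EW.IsSymmetric) (hPT : PT.IsSymmetric)
    {α τ τ₀ g₀ q q₀ : H} (hτ : PT τ = τ) (hτ₀ : PT τ₀ = τ₀) (hg₀ : EW g₀ = EW τ₀)
    (hq₀ : PT q₀ = α) (hq : EW q = q) :
    ⟪α, τ⟫ + ⟪q, g₀ - τ⟫ - ⟪α, τ₀⟫ = -⟪q - q₀, τ - τ₀⟫ := by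
  have hcorrection : ⟪q, g₀ - τ⟫ = ⟪q, τ₀ - τ⟫ := by
    rw [← hEW.inner_map_right_of_apply_eq hq, map_sub, hg₀, ← map_sub,
      hEW.inner_map_right_of_apply_eq hq]
  have hriesz : ⟪α, τ - τ₀⟫ = ⟪q₀, τ - τ₀⟫ := by
    rw [← hq₀, hPT, map_sub, hτ, hτ₀]
  simp only [inner_sub_left, inner_sub_right] at hcorrection hriesz ⊢
  linarith

end DebiasedMoment

theorem debiased_moment_error_bound_general
    {H : Type*} [NormedAddCommGroup H] [InnerProductSpace ℝ H]
    (EW PT : H →ₗ[ℝ] H)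
    (hEWidem : ∀ x, EW (EW x) = EW x) (hEWsa : ∀ x y, ⟪EW x, y⟫ = ⟪x, EW y⟫)
    (hPTsa : ∀ x y, ⟪PT x, y⟫ = ⟪x, PT y⟫)
    (α τ τ₀ g₀ ξ₀ q q₀ : H) (θ₀ : ℝ)
    (hτ : PT τ = τ) (hτ₀ : PT τ₀ = τ₀)
    (hg₀ : EW g₀ = EW τ₀)
    (hξ₀ : PT (EW ξ₀) = α) (hq₀ : q₀ = EW ξ₀)
    (hq : EW q = q)
    (hθ : θ₀ = ⟪α, τ₀⟫) :
    |(⟪α, τ⟫ + ⟪q, g₀ - τ⟫) - θ₀|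
      ≤ min (‖EW (τ - τ₀)‖ * ‖q - q₀‖) (‖τ - τ₀‖ * ‖PT (q - q₀)‖) := by
  subst hq₀ hθ
  have hEWdiff : EW (q - EW ξ₀) = q - EW ξ₀ := by rw [map_sub, hq, hEWidem]
  have hPTdiff : PT (τ - τ₀) = τ - τ₀ := by rw [map_sub, hτ, hτ₀]
  rw [debiased_moment_error_eq hEWsa hPTsa hτ hτ₀ hg₀ hξ₀ hq, abs_neg]
  refine le_min ?_ ?_
  · rw [mul_comm]
    exact LinearMap.IsSymmetric.abs_inner_le_norm_mul_norm_map hEWsa hEWdiff _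
  · rw [real_inner_comm]
    exact LinearMap.IsSymmetric.abs_inner_le_norm_mul_norm_map hPTsa hPTdiff _

/-- error bound for the debiased moment
`ψ(O;τ,q) = m(O;τ) + q(W)(g₀(Z) − τ(Z))`:
`|E[ψ(O;τ,q)] − θ₀| ≤ min{ ‖E[τ−τ₀|W]‖·‖q−q₀‖ , ‖τ−τ₀‖·‖Π_𝒯[E[q−q₀|Z]]‖ }`.
Setting as in the error identity: `H = L²(Ω)`, `EW` conditional expectation given
`W`, `PT` orthogonal projection onto `𝒯 ⊆ L²(Z)` (so that `Π_𝒯[E[·|Z]] = PT`),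
`α` the Riesz representer, `q₀ ∈ 𝒬₀`, `τ₀ ∈ 𝒯_valid`. -/
theorem debiased_moment_error_bound
    {H : Type*} [NormedAddCommGroup H] [InnerProductSpace ℝ H]
    (EW PT : H →ₗ[ℝ] H)
    (hEWidem : ∀ x, EW (EW x) = EW x) (hEWsa : ∀ x y, ⟪EW x, y⟫ = ⟪x, EW y⟫)
    (hPTidem : ∀ x, PT (PT x) = PT x) (hPTsa : ∀ x y, ⟪PT x, y⟫ = ⟪x, PT y⟫)
    (α τ τ₀ g₀ ξ₀ q q₀ : H) (θ₀ : ℝ)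
    (hα : PT α = α) (hτ : PT τ = τ) (hτ₀ : PT τ₀ = τ₀)
    (hg₀ : EW g₀ = EW τ₀)
    (hξ₀ : PT (EW ξ₀) = α) (hq₀ : q₀ = EW ξ₀)
    (hq : EW q = q)
    (hθ : θ₀ = ⟪α, τ₀⟫) :
    |(⟪α, τ⟫ + ⟪q, g₀ - τ⟫) - θ₀|
      ≤ min (‖EW (τ - τ₀)‖ * ‖q - q₀‖) (‖τ - τ₀‖ * ‖PT (q - q₀)‖) :=
  debiased_moment_error_bound_general EW PT hEWidem hEWsa hPTsa α τ τ₀ g₀ ξ₀ q q₀ θ₀ hτ hτ₀ hg₀ hξ₀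
    hq₀ hq hθ
end

section
/- Double robustness: with ψ(O;τ,q) = m(O;τ) + q(W)(g₀(Z) − τ(Z)), for any τ₀ ∈ 𝒯_valid, q₀ ∈ 𝒬₀, τ ∈ 𝒯, q ∈ L²(W), it holds that θ₀ = E[ψ(O; τ₀, q)] = E[ψ(O; τ, q₀)]. -/
open RealInnerProductSpace

namespace LinearMap.IsSymmetric

variable {H : Type*} [NormedAddCommGroup H] [InnerProductSpace ℝ H] {E : H →ₗ[ℝ] H}

theorem inner_eq_of_map_eq_s14 (hE : E.IsSymmetric) {x g t : H} (hx : E x = x) (h : E g = E t) :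
    ⟪x, g⟫ = ⟪x, t⟫ :=
  calc ⟪x, g⟫ = ⟪E x, g⟫ := by rw [hx]
    _ = ⟪x, E g⟫ := hE x g
    _ = ⟪x, E t⟫ := by rw [h]
    _ = ⟪E x, t⟫ := (hE x t).symm
    _ = ⟪x, t⟫ := by rw [hx]

theorem inner_eq_inner_map_of_map_eq_self (hE : E.IsSymmetric) (z : H) {x : H} (hx : E x = x) :
    ⟪z, x⟫ = ⟪E z, x⟫ := by
  rw [hE z x, hx]

end LinearMap.IsSymmetric

/-- `H = L²(Ω)`, `EW` is the conditional expectation given `W` and `PT` the orthogonal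
projection onto the closed subspace `𝒯 ⊆ L²(Z)`; `α` is the Riesz representer of
`τ ↦ E[m(O;τ)]` on `𝒯`, so that `E[ψ(O;τ,q)] = ⟪α,τ⟫ + ⟪q, g₀ − τ⟫` and `θ₀ = ⟪α,τ₀⟫`. -/
theorem double_robustness_general
    {H : Type*} [NormedAddCommGroup H] [InnerProductSpace ℝ H]
    (EW PT : H →ₗ[ℝ] H)
    (hEWidem : ∀ x, EW (EW x) = EW x) (hEWsa : ∀ x y, ⟪EW x, y⟫ = ⟪x, EW y⟫)
    (hPTsa : ∀ x y, ⟪PT x, y⟫ = ⟪x, PT y⟫)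
    (α τ τ₀ g₀ ξ₀ q q₀ : H) (θ₀ : ℝ)
    (hτ : PT τ = τ) (hτ₀ : PT τ₀ = τ₀)
    (hg₀ : EW g₀ = EW τ₀)
    (hξ₀ : PT (EW ξ₀) = α) (hq₀ : q₀ = EW ξ₀)
    (hq : EW q = q)
    (hθ : θ₀ = ⟪α, τ₀⟫) :
    θ₀ = ⟪α, τ₀⟫ + ⟪q, g₀ - τ₀⟫ ∧ θ₀ = ⟪α, τ⟫ + ⟪q₀, g₀ - τ⟫ := by
  have hEW : EW.IsSymmetric := hEWsa
  have hPT : PT.IsSymmetric := hPTsa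
  have hq₀W : EW q₀ = q₀ := by rw [hq₀, hEWidem]
  have hq₀_on_𝒯 : ∀ x, PT x = x → ⟪q₀, x⟫ = ⟪α, x⟫ := fun x hx => by
    rw [hPT.inner_eq_inner_map_of_map_eq_self q₀ hx, hq₀, hξ₀]
  constructor
  · rw [inner_sub_right, hEW.inner_eq_of_map_eq_s14 hq hg₀, sub_self, add_zero, hθ]
  · rw [inner_sub_right, hEW.inner_eq_of_map_eq_s14 hq₀W hg₀, hq₀_on_𝒯 τ₀ hτ₀, hq₀_on_𝒯 τ hτ, hθ]
    ring

/-- double robustness of the debiased moment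
`ψ(O;τ,q) = m(O;τ) + q(W)(g₀(Z) − τ(Z))`: for any `τ₀ ∈ 𝒯_valid`, `q₀ ∈ 𝒬₀`,
`τ ∈ 𝒯`, `q ∈ L²(W)`, `θ₀ = E[ψ(O;τ₀,q)] = E[ψ(O;τ,q₀)]`.
Setting: `H = L²(Ω)`, `EW` the conditional expectation given `W` and `PT` the
orthogonal projection onto the closed subspace `𝒯 ⊆ L²(Z)` (self-adjoint
idempotent maps); `α` the Riesz representer of `τ ↦ E[m(O;τ)]` on `𝒯`, so that
`E[ψ(O;τ,q)] = ⟪α,τ⟫ + ⟪q, g₀ − τ⟫` and `θ₀ = ⟪α,τ₀⟫`. -/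
theorem double_robustness
    {H : Type*} [NormedAddCommGroup H] [InnerProductSpace ℝ H]
    (EW PT : H →ₗ[ℝ] H)
    (hEWidem : ∀ x, EW (EW x) = EW x) (hEWsa : ∀ x y, ⟪EW x, y⟫ = ⟪x, EW y⟫)
    (hPTidem : ∀ x, PT (PT x) = PT x) (hPTsa : ∀ x y, ⟪PT x, y⟫ = ⟪x, PT y⟫)
    (α τ τ₀ g₀ ξ₀ q q₀ : H) (θ₀ : ℝ)
    (hα : PT α = α) (hτ : PT τ = τ) (hτ₀ : PT τ₀ = τ₀)
    (hg₀ : EW g₀ = EW τ₀)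
    (hξ₀ : PT (EW ξ₀) = α) (hq₀ : q₀ = EW ξ₀)
    (hq : EW q = q)
    (hθ : θ₀ = ⟪α, τ₀⟫) :
    θ₀ = ⟪α, τ₀⟫ + ⟪q, g₀ - τ₀⟫ ∧ θ₀ = ⟪α, τ⟫ + ⟪q₀, g₀ - τ⟫ :=
  double_robustness_general EW PT hEWidem hEWsa hPTsa α τ τ₀ g₀ ξ₀ q q₀ θ₀ hτ hτ₀ hg₀ hξ₀ hq₀ hq hθ
end
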